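/- arXiv:2201.00505 — 2 statements merged into one kernel-verified Lean document; each statement's English description precedes it below -/
import Mathlib

section
/- Let u ∈ ℝ^n and p ∈ (0,1). Let I_> = {i : u_i > Q_p(u)} and δ = (n − |I_>|)/n − p. Then the p-superquantile of u satisfies Q̄_p(u) = (1/(n(1−p))) Σ_{i ∈ I_>} u_i + (δ/(1−p)) Q_p(u). -/
/-!
On `(k/n, (k+1)/n]` the quantile `Q_s(u)` is the `k`-th order statistic of `u`,
so `∫₀¹ g (Q_s(u)) ds = (1/n) ∑ᵢ g (uᵢ)` for every `g`. Since `Q_s ≤ Q_p` for `s ≤ p`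
and `Q_s ≥ Q_p` for `s > p`, taking `g x = max (x - Q_p) 0` gives
`∫ₚ¹ (Q_s - Q_p) ds = (1/n) ∑_{i ∈ I_>} (uᵢ - Q_p)`, which rearranges to the formula.
-/

open Finset MeasureTheory

/-- Empirical `p`-quantile of `u ∈ ℝⁿ`:
`Q_p(u) = inf {t : #{i : u i ≤ t} ≥ p·n}`. -/
noncomputable def empQuantile {n : ℕ} (p : ℝ) (u : Fin n → ℝ) : ℝ :=
  sInf {t : ℝ | p * n ≤ ((Finset.univ.filter fun i => u i ≤ t).card : ℝ)}

/-- Empirical `p`-superquantile of `u ∈ ℝⁿ`: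
`Q̄_p(u) = (1/(1-p)) ∫_p^1 Q_s(u) ds`. -/
noncomputable def supQuantile {n : ℕ} (p : ℝ) (u : Fin n → ℝ) : ℝ :=
  (1 - p)⁻¹ * ∫ s in p..1, empQuantile s u

variable {n : ℕ}

theorem Monotone.lt_card_filter_le_iff {α : Type*} [LinearOrder α] {v : Fin n → α}
    (hv : Monotone v) (k : Fin n) (t : α) : (k : ℕ) < #{j | v j ≤ t} ↔ v k ≤ t := by
  constructor
  · intro hk
    by_contra! htk
    have hsub : ({j | v j ≤ t} : Finset (Fin n)) ⊆ Iio k := fun j hj =>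
      mem_Iio.2 (hv.reflect_lt ((mem_filter.1 hj).2.trans_lt htk))
    have := (card_le_card hsub).trans_eq (Fin.card_Iio k)
    omega
  · intro hkt
    have hsub : Iic k ⊆ ({j | v j ≤ t} : Finset (Fin n)) := fun j hj =>
      mem_filter.2 ⟨mem_univ j, (hv (mem_Iic.1 hj)).trans hkt⟩
    have := (Fin.card_Iic k).symm.trans_le (card_le_card hsub)
    omega

theorem card_filter_comp_perm {α : Type*} (σ : Equiv.Perm (Fin n)) (P : α → Prop)
    [DecidablePred P] (u : Fin n → α) : #{j | P (u (σ j))} = #{i | P (u i)} := by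
  simp only [card_filter]
  exact Equiv.sum_comp σ (fun i => if P (u i) then 1 else 0)

theorem empQuantile_eq_of_ceil_eq (u : Fin n → ℝ) {s : ℝ} (k : Fin n)
    (hk : ⌈s * n⌉₊ = k + 1) : empQuantile s u = u (Tuple.sort u k) := by
  have hset : {t : ℝ | s * n ≤ #{i | u i ≤ t}} = Set.Ici (u (Tuple.sort u k)) := by
    ext t
    rw [Set.mem_ofPred_eq, ← Nat.ceil_le, hk, Set.mem_Ici, Order.add_one_le_iff,
      ← card_filter_comp_perm (Tuple.sort u) (· ≤ t) u]
    exact (Tuple.monotone_sort u).lt_card_filter_le_iff k t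
  rw [empQuantile, hset, csInf_Ici]

theorem empQuantile_eq_of_mem_Ioc (u : Fin n → ℝ) (k : Fin n) {s : ℝ}
    (hs : s ∈ Set.Ioc ((k : ℝ) / n) ((k + 1) / n)) : empQuantile s u = u (Tuple.sort u k) := by
  have hn : (0 : ℝ) < n := Nat.cast_pos.2 k.pos
  refine empQuantile_eq_of_ceil_eq u k ((Nat.ceil_eq_iff k.val.succ_ne_zero).2 ⟨?_, ?_⟩)
  · push_cast
    linarith [(div_lt_iff₀ hn).1 hs.1]
  · push_cast
    exact (le_div_iff₀ hn).1 hs.2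

theorem exists_ceil_eq_succ {s : ℝ} (hn : 0 < n) (hs0 : 0 < s) (hs1 : s ≤ 1) :
    ∃ k : Fin n, ⌈s * n⌉₊ = k + 1 := by
  have hpos : 0 < ⌈s * n⌉₊ := Nat.ceil_pos.2 (by positivity)
  have hle : ⌈s * n⌉₊ ≤ n := Nat.ceil_le.2 (mul_le_of_le_one_left n.cast_nonneg hs1)
  exact ⟨⟨⌈s * n⌉₊ - 1, by omega⟩, by simp only; omega⟩

theorem monotoneOn_empQuantile (u : Fin n → ℝ) (hn : 0 < n) :
    MonotoneOn (empQuantile · u) (Set.Ioc 0 1) := by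
  intro s hs s' hs' hss'
  obtain ⟨k, hk⟩ := exists_ceil_eq_succ hn hs.1 hs.2
  obtain ⟨k', hk'⟩ := exists_ceil_eq_succ hn hs'.1 hs'.2
  have hkk' : k ≤ k' := by
    have := Nat.ceil_mono (mul_le_mul_of_nonneg_right hss' n.cast_nonneg)
    rw [hk, hk'] at this
    exact Fin.le_def.2 (by omega)
  simp only [empQuantile_eq_of_ceil_eq u k hk, empQuantile_eq_of_ceil_eq u k' hk']
  exact Tuple.monotone_sort u hkk'

theorem intervalIntegrable_and_integral_comp_empQuantile (u : Fin n → ℝ) (g : ℝ → ℝ)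
    (hn : 0 < n) :
    IntervalIntegrable (fun s => g (empQuantile s u)) volume 0 1 ∧
      ∫ s in 0..1, g (empQuantile s u) = (∑ i, g (u i)) / n := by
  have hn' : (0 : ℝ) < n := Nat.cast_pos.2 hn
  set a : ℕ → ℝ := fun k => k / n
  have hpiece : ∀ k : Fin n, Set.EqOn (fun s => g (empQuantile s u))
      (fun _ => g (u (Tuple.sort u k))) (Set.uIoc (a k) (a (k + 1))) := by
    intro k s hs
    rw [Set.uIoc_of_le (by simp only [a]; gcongr; simp)] at hs
    simp only [a, Nat.cast_succ] at hs
    simp only [empQuantile_eq_of_mem_Ioc u k hs]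
  have hint : ∀ k < n,
      IntervalIntegrable (fun s => g (empQuantile s u)) volume (a k) (a (k + 1)) :=
    fun k hk => (intervalIntegrable_congr (hpiece ⟨k, hk⟩)).2 intervalIntegrable_const
  have ha0 : a 0 = 0 := by simp [a]
  have han : a n = 1 := div_self hn'.ne'
  refine ⟨ha0 ▸ han ▸ IntervalIntegrable.trans_iterate hint, ?_⟩
  rw [← ha0, ← han, ← intervalIntegral.sum_integral_adjacent_intervals hint, Finset.sum_range,
    ← Equiv.sum_comp (Tuple.sort u) (fun i => g (u i)), Finset.sum_div]
  refine Finset.sum_congr rfl fun k _ => ?_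
  rw [intervalIntegral.integral_congr_ae (Filter.Eventually.of_forall fun s hs => hpiece k hs),
    intervalIntegral.integral_const, smul_eq_mul]
  simp only [a, Nat.cast_succ]
  field_simp
  ring

theorem integral_empQuantile_sub_eq (u : Fin n → ℝ) {p : ℝ} (hn : 0 < n) (hp0 : 0 < p)
    (hp1 : p ≤ 1) :
    ∫ s in p..1, (empQuantile s u - empQuantile p u) =
      (∑ i, max (u i - empQuantile p u) 0) / n := by
  set q := empQuantile p u
  have hmono := monotoneOn_empQuantile u hn
  obtain ⟨hint, hintegral⟩ :=
    intervalIntegrable_and_integral_comp_empQuantile u (fun x => max (x - q) 0) hn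
  have hp : p ∈ Set.uIcc (0 : ℝ) 1 := by
    rw [Set.uIcc_of_le zero_le_one]; exact ⟨hp0.le, hp1⟩
  have hsplit := intervalIntegral.integral_add_adjacent_intervals
    (hint.mono_set (Set.uIcc_subset_uIcc_left hp))
    (hint.mono_set (Set.uIcc_subset_uIcc_right hp))
  have hhead : ∫ s in 0..p, max (empQuantile s u - q) 0 = 0 := by
    rw [intervalIntegral.integral_congr_ae (g := fun _ => 0), intervalIntegral.integral_zero]
    refine Filter.Eventually.of_forall fun s hs => ?_
    rw [Set.uIoc_of_le hp0.le] at hs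
    exact max_eq_right (sub_nonpos.2 (hmono ⟨hs.1, hs.2.trans hp1⟩ ⟨hp0, hp1⟩ hs.2))
  have htail :
      ∫ s in p..1, max (empQuantile s u - q) 0 = ∫ s in p..1, (empQuantile s u - q) := by
    refine intervalIntegral.integral_congr_ae (Filter.Eventually.of_forall fun s hs => ?_)
    rw [Set.uIoc_of_le hp1] at hs
    exact max_eq_left (sub_nonneg.2 (hmono ⟨hp0, hp1⟩ ⟨hp0.trans hs.1, hs.2⟩ hs.1.le))
  rw [← htail, ← hintegral, ← hsplit, hhead, zero_add]

theorem sum_max_sub_zero_eq {ι : Type*} (s : Finset ι) (u : ι → ℝ) (q : ℝ) :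
    ∑ i ∈ s, max (u i - q) 0 = ∑ i ∈ s with q < u i, u i - #{i ∈ s | q < u i} * q := by
  rw [← nsmul_eq_mul, ← sum_const, ← sum_sub_distrib, sum_filter]
  refine sum_congr rfl fun i _ => ?_
  split_ifs with h
  · exact max_eq_left (sub_nonneg.2 h.le)
  · exact max_eq_right (sub_nonpos.2 (not_lt.1 h))

/-- Discrete formula for the superquantile:
`Q̄_p(u) = (1/(n(1-p))) Σ_{i ∈ I_>} u_i + (δ/(1-p)) Q_p(u)` where
`I_> = {i : u_i > Q_p(u)}` and `δ = (n - |I_>|)/n - p`. -/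
theorem stmt2 {n : ℕ} (hn : 1 ≤ n) (u : Fin n → ℝ) (p : ℝ) (hp0 : 0 < p) (hp1 : p < 1) :
    supQuantile p u =
      (1 / ((n : ℝ) * (1 - p))) *
          ∑ i ∈ Finset.univ.filter (fun i => empQuantile p u < u i), u i +
        ((((n : ℝ) -
              ((Finset.univ.filter fun i => empQuantile p u < u i).card : ℝ)) / n - p) /
            (1 - p)) * empQuantile p u := by
  have hQint : IntervalIntegrable (empQuantile · u) volume p 1 :=
    ((monotoneOn_empQuantile u hn).mono (by
      rw [Set.uIcc_of_le hp1.le]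
      exact fun s hs => ⟨hp0.trans_le hs.1, hs.2⟩)).intervalIntegrable
  have htail := integral_empQuantile_sub_eq u hn hp0 hp1.le
  rw [intervalIntegral.integral_sub hQint intervalIntegrable_const, intervalIntegral.integral_const,
    smul_eq_mul, sum_max_sub_zero_eq] at htail
  have hn' : (n : ℝ) ≠ 0 := by positivity
  have hp : 1 - p ≠ 0 := by linarith
  rw [supQuantile, eq_add_of_sub_eq htail]
  field_simp
  ring
end

section
/- Let u ∈ ℝ^n and p ∈ (0,1). Then the p-superquantile of u equals the optimal value of the linear maximization over the superquantile ambiguity set: Q̄_p(u) = max_{q ∈ C_p} Σ_{i=1}^n q_i u_i, and the maximum is attained. -/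
/-!
Both sides are invariant under permuting the entries of `u`, so we may assume `u` nondecreasing.
Then `Q_s(u) = u k` for `s ∈ (k / n, (k + 1) / n]`, hence `Q̄_p(u) = ∑ k, w k * u k`, where `w k`
is the mass the uniform probability measure on `[p, 1]` gives to that cell; `w ∈ C_p`.
For the upper bound take the threshold `t = u m`, `m = ⌊p n⌋`: entries above `t` carry the
maximal weight `w k = ℓ ≥ q k`, entries below it carry `w k = 0 ≤ q k`. So every term of
`∑ k, (w k - q k) * (u k - t)` is nonnegative, and since `∑ w = ∑ q` this sum is
`∑ w u - ∑ q u`.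
-/

open Finset MeasureTheory

/-- The superquantile ambiguity set
`C_p = {q : q_i ≥ 0, Σ_i q_i = 1, q_i ≤ 1/(n(1-p))}`. -/
def Cp (n : ℕ) (p : ℝ) : Set (Fin n → ℝ) :=
  {q | (∀ i, 0 ≤ q i) ∧ (∑ i, q i) = 1 ∧ ∀ i, q i ≤ 1 / ((n : ℝ) * (1 - p))}

lemma sum_mul_le_sum_mul_of_threshold {ι : Type*} [Fintype ι] {q w u : ι → ℝ} (t : ℝ)
    (hsum : ∑ i, q i = ∑ i, w i) (hhi : ∀ i, t < u i → q i ≤ w i)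
    (hlo : ∀ i, u i < t → w i ≤ q i) :
    ∑ i, q i * u i ≤ ∑ i, w i * u i := by
  have hshift : ∑ i, w i * u i - ∑ i, q i * u i = ∑ i, (w i - q i) * (u i - t) := by
    simp only [sub_mul, mul_sub, sum_sub_distrib, ← sum_mul, hsum]
    ring
  have hterm : ∀ i, 0 ≤ (w i - q i) * (u i - t) := by
    intro i
    rcases lt_trichotomy (u i) t with h | h | h
    · exact mul_nonneg_of_nonpos_of_nonpos (by linarith [hlo i h]) (by linarith)
    · simp [h]
    · exact mul_nonneg (by linarith [hhi i h]) (by linarith)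
  linarith [sum_nonneg fun i (_ : i ∈ univ) => hterm i]

section Permutation

variable {n : ℕ}

lemma empQuantile_comp_perm (s : ℝ) (u : Fin n → ℝ) (σ : Equiv.Perm (Fin n)) :
    empQuantile s (u ∘ σ) = empQuantile s u := by
  have hcard : ∀ t : ℝ, #{i | (u ∘ σ) i ≤ t} = #{i | u i ≤ t} := fun t =>
    card_equiv σ (by simp)
  simp only [empQuantile, hcard]

lemma supQuantile_comp_perm (p : ℝ) (u : Fin n → ℝ) (σ : Equiv.Perm (Fin n)) :
    supQuantile p (u ∘ σ) = supQuantile p u := by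
  simp only [supQuantile, empQuantile_comp_perm]

lemma comp_perm_mem_Cp_iff {p : ℝ} {q : Fin n → ℝ} (σ : Equiv.Perm (Fin n)) :
    q ∘ σ ∈ Cp n p ↔ q ∈ Cp n p := by
  simp only [Cp, Set.mem_ofPred_eq, Function.comp_apply, Equiv.sum_comp σ q,
    σ.forall_congr_left (p := fun i => 0 ≤ q (σ i)),
    σ.forall_congr_left (p := fun i => q (σ i) ≤ _), Equiv.apply_symm_apply]

lemma image_Cp_comp_perm (p : ℝ) (u : Fin n → ℝ) (σ : Equiv.Perm (Fin n)) :
    (fun q : Fin n → ℝ => ∑ i, q i * (u ∘ σ) i) '' Cp n p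
      = (fun q : Fin n → ℝ => ∑ i, q i * u i) '' Cp n p := by
  ext x
  constructor
  · rintro ⟨q, hq, rfl⟩
    refine ⟨q ∘ σ.symm, (comp_perm_mem_Cp_iff σ.symm).2 hq, ?_⟩
    simpa using (Equiv.sum_comp σ (fun i => q (σ.symm i) * u i)).symm
  · rintro ⟨q, hq, rfl⟩
    exact ⟨q ∘ σ, (comp_perm_mem_Cp_iff σ).2 hq, Equiv.sum_comp σ (fun i => q i * u i)⟩

end Permutation

lemma intervalIntegrable_of_eqOn_Ioc_const {f : ℝ → ℝ} {a b c : ℝ} (hab : a ≤ b)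
    (h : Set.EqOn f (fun _ => c) (Set.Ioc a b)) : IntervalIntegrable f volume a b := by
  rw [← Set.uIoc_of_le hab] at h
  exact (intervalIntegrable_congr h).2 intervalIntegrable_const

lemma intervalIntegral_eq_of_eqOn_Ioc_const {f : ℝ → ℝ} {a b c : ℝ} (hab : a ≤ b)
    (h : Set.EqOn f (fun _ => c) (Set.Ioc a b)) : ∫ x in a..b, f x = (b - a) * c := by
  rw [← Set.uIoc_of_le hab] at h
  rw [intervalIntegral.integral_congr_ae (.of_forall fun x hx => h hx),
    intervalIntegral.integral_const, smul_eq_mul]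

section Weights

variable {n : ℕ} {p : ℝ}

noncomputable def clipGrid (n : ℕ) (p : ℝ) (k : ℕ) : ℝ := max p (k / n)

/-- The mass that the uniform probability measure on `[p, 1]` gives to the cell
`(k / n, (k + 1) / n]`. -/
noncomputable def superquantileWeight (n : ℕ) (p : ℝ) (k : Fin n) : ℝ :=
  (clipGrid n p ((k : ℕ) + 1) - clipGrid n p k) / (1 - p)

lemma clipGrid_zero (hp : 0 ≤ p) : clipGrid n p 0 = p := by
  simp [clipGrid, hp]

lemma clipGrid_self (hn : 0 < n) (hp : p ≤ 1) : clipGrid n p n = 1 := by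
  simp [clipGrid, hn.ne', hp]

lemma clipGrid_mono : Monotone (clipGrid n p) := fun _ _ h =>
  max_le_max le_rfl (div_le_div_of_nonneg_right (by exact_mod_cast h) n.cast_nonneg)

lemma clipGrid_succ_le (k : ℕ) : clipGrid n p (k + 1) ≤ clipGrid n p k + 1 / n := by
  have hsplit : ((k + 1 : ℕ) : ℝ) / n = k / n + 1 / n := by push_cast; ring
  simp only [clipGrid, hsplit]
  exact max_le (by linarith [le_max_left p ((k : ℝ) / n), (by positivity : (0 : ℝ) ≤ 1 / n)])
    (by linarith [le_max_right p ((k : ℝ) / n)])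

lemma clipGrid_of_le_mul (hn : 0 < n) {k : ℕ} (hk : p * n ≤ k) : clipGrid n p k = k / n :=
  max_eq_right ((le_div_iff₀ (by exact_mod_cast hn)).2 hk)

lemma clipGrid_of_mul_ge (hn : 0 < n) {k : ℕ} (hk : k ≤ p * n) : clipGrid n p k = p :=
  max_eq_left ((div_le_iff₀ (by exact_mod_cast hn)).2 hk)

lemma superquantileWeight_of_le_mul {k : Fin n} (hk : p * n ≤ k) :
    superquantileWeight n p k = 1 / (n * (1 - p)) := by
  rw [superquantileWeight, clipGrid_of_le_mul k.pos hk,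
    clipGrid_of_le_mul k.pos (hk.trans (by simp))]
  push_cast
  field_simp
  ring

lemma superquantileWeight_of_mul_ge {k : Fin n} (hk : (k : ℝ) + 1 ≤ p * n) :
    superquantileWeight n p k = 0 := by
  rw [superquantileWeight, clipGrid_of_mul_ge k.pos (by push_cast; exact hk),
    clipGrid_of_mul_ge k.pos (by linarith), sub_self, zero_div]

lemma superquantileWeight_mem_Cp (hn : 0 < n) (hp0 : 0 ≤ p) (hp1 : p < 1) :
    superquantileWeight n p ∈ Cp n p := by
  have h1p : 0 < 1 - p := by linarith
  refine ⟨fun k => div_nonneg (sub_nonneg.2 (clipGrid_mono (Nat.le_succ _))) h1p.le, ?_,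
    fun k => ?_⟩
  · simp only [superquantileWeight]
    rw [← sum_div,
      Fin.sum_univ_eq_sum_range (fun k => clipGrid n p (k + 1) - clipGrid n p k), sum_range_sub,
      clipGrid_self hn hp1.le, clipGrid_zero hp0, div_self h1p.ne']
  · rw [← div_div]
    exact div_le_div_of_nonneg_right (by linarith [clipGrid_succ_le (n := n) (p := p) k]) h1p.le

end Weights

section Sorted

variable {n : ℕ} {p : ℝ} {v : Fin n → ℝ}

lemma Monotone.le_card_filter_le_iff (hv : Monotone v) (k : Fin n) (t : ℝ) :
    (k : ℕ) + 1 ≤ #{i | v i ≤ t} ↔ v k ≤ t := by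
  constructor
  · intro h
    by_contra! ht
    have hsub : ({i | v i ≤ t} : Finset (Fin n)) ⊆ Iio k := fun i hi =>
      mem_Iio.2 (hv.reflect_lt ((mem_filter.1 hi).2.trans_lt ht))
    have := card_le_card hsub
    rw [Fin.card_Iio] at this
    omega
  · intro h
    have hsub : Iic k ⊆ ({i | v i ≤ t} : Finset (Fin n)) := fun i hi => by
      simpa using (hv (mem_Iic.1 hi)).trans h
    simpa using card_le_card hsub

lemma Monotone.empQuantile_eq (hv : Monotone v) (k : Fin n) {s : ℝ}
    (hlo : (k : ℝ) < s * n) (hhi : s * n ≤ k + 1) : empQuantile s v = v k := by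
  have hset : {t : ℝ | s * n ≤ (#{i | v i ≤ t} : ℝ)} = Set.Ici (v k) := by
    ext t
    rw [Set.mem_ofPred_eq, Set.mem_Ici, ← hv.le_card_filter_le_iff k t]
    constructor
    · intro h
      exact_mod_cast hlo.trans_le h
    · intro h
      exact hhi.trans (by exact_mod_cast h)
  rw [empQuantile, hset, csInf_Ici]

lemma Monotone.empQuantile_eqOn_Ioc (hv : Monotone v) (k : Fin n) :
    Set.EqOn (empQuantile · v) (fun _ => v k)
      (Set.Ioc (clipGrid n p k) (clipGrid n p ((k : ℕ) + 1))) := by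
  rintro s ⟨hlo, hhi⟩
  have hn : (0 : ℝ) < n := by exact_mod_cast k.pos
  have hps : p < s := (le_max_left _ _).trans_lt hlo
  have hhi' : s ≤ ((k : ℕ) + 1 : ℕ) / n := by
    rcases le_max_iff.1 hhi with h | h
    · exact absurd h hps.not_ge
    · exact h
  refine hv.empQuantile_eq k ?_ ?_
  · exact (div_lt_iff₀ hn).1 ((le_max_right _ _).trans_lt hlo)
  · exact_mod_cast (le_div_iff₀ hn).1 hhi'

lemma Monotone.integral_empQuantile (hv : Monotone v) (hn : 0 < n) (hp0 : 0 ≤ p)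
    (hp1 : p ≤ 1) :
    ∫ s in p..1, empQuantile s v
      = ∑ k : Fin n, (clipGrid n p ((k : ℕ) + 1) - clipGrid n p k) * v k := by
  have hstep : ∀ k : ℕ, clipGrid n p k ≤ clipGrid n p (k + 1) :=
    fun k => clipGrid_mono (Nat.le_succ k)
  have hsum := intervalIntegral.sum_integral_adjacent_intervals (μ := volume)
    (f := (empQuantile · v)) (n := n) fun k hk =>
      intervalIntegrable_of_eqOn_Ioc_const (hstep k) (hv.empQuantile_eqOn_Ioc ⟨k, hk⟩)
  rw [clipGrid_zero hp0, clipGrid_self hn hp1, sum_range] at hsum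
  rw [← hsum]
  exact sum_congr rfl fun k _ =>
    intervalIntegral_eq_of_eqOn_Ioc_const (hstep k) (hv.empQuantile_eqOn_Ioc k)

lemma Monotone.supQuantile_eq (hv : Monotone v) (hn : 0 < n) (hp0 : 0 ≤ p) (hp1 : p ≤ 1) :
    supQuantile p v = ∑ k, superquantileWeight n p k * v k := by
  rw [supQuantile, hv.integral_empQuantile hn hp0 hp1, mul_sum]
  exact sum_congr rfl fun k _ => by rw [superquantileWeight]; ring

theorem Monotone.isGreatest_supQuantile (hv : Monotone v) (hn : 0 < n) (hp0 : 0 ≤ p)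
    (hp1 : p < 1) :
    IsGreatest ((fun q : Fin n → ℝ => ∑ i, q i * v i) '' Cp n p) (supQuantile p v) := by
  have hw := superquantileWeight_mem_Cp hn hp0 hp1
  rw [hv.supQuantile_eq hn hp0 hp1.le]
  refine ⟨⟨_, hw, rfl⟩, ?_⟩
  rintro _ ⟨q, ⟨hq0, hq1, hqℓ⟩, rfl⟩
  have hpn : 0 ≤ p * n := by positivity
  have hm : ⌊p * n⌋₊ < n :=
    (Nat.floor_lt hpn).2 (mul_lt_of_lt_one_left (Nat.cast_pos.2 hn) hp1)
  refine sum_mul_le_sum_mul_of_threshold (v ⟨⌊p * n⌋₊, hm⟩) (by rw [hq1, hw.2.1])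
    (fun k hk => ?_) (fun k hk => ?_)
  · have hmk : ⌊p * n⌋₊ + 1 ≤ (k : ℕ) := hv.reflect_lt hk
    rw [superquantileWeight_of_le_mul]
    · exact hqℓ k
    · exact (Nat.lt_floor_add_one _).le.trans (by exact_mod_cast hmk)
  · have hkm : (k : ℕ) + 1 ≤ ⌊p * n⌋₊ := hv.reflect_lt hk
    rw [superquantileWeight_of_mul_ge]
    · exact hq0 k
    · exact (by exact_mod_cast hkm : ((k : ℕ) + 1 : ℝ) ≤ ⌊p * n⌋₊).trans (Nat.floor_le hpn)

end Sorted

/-- Dual (distributionally robust) formulation: the superquantile is the maximal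
value (attained) of `q ↦ Σ_i q_i u_i` over the ambiguity set `C_p`. -/
theorem stmt3 {n : ℕ} (hn : 1 ≤ n) (u : Fin n → ℝ) (p : ℝ) (hp0 : 0 < p) (hp1 : p < 1) :
    IsGreatest ((fun q : Fin n → ℝ => ∑ i, q i * u i) '' Cp n p) (supQuantile p u) := by
  have hsorted := (Tuple.monotone_sort u).isGreatest_supQuantile hn hp0.le hp1
  rwa [image_Cp_comp_perm, supQuantile_comp_perm] at hsorted
end
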